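/- arXiv:1907.09985 — 4 statements merged into one kernel-verified Lean document; each statement's English description precedes it below -/
import Mathlib

section
/- Let F(b) be the feasible set of a linear inequality system in ℝⁿ and S(b) the set of Pareto-nondominated points of F(b) with respect to objectives c₁,…,c_q. If S(b) is nonempty, then for every x₀ ∈ F(b) \ S(b) there exists x̃₀ ∈ S(b) with ⟨cᵢ, x̃₀⟩ ≤ ⟨cᵢ, x₀⟩ for every i = 1,…,q. -/
/-! Minimize `∑ⱼ ⟨cⱼ, x⟩` over the polyhedron `{x ∈ F(b) : ⟨cⱼ, x⟩ ≤ ⟨cⱼ, x₀⟩ for all j}`: a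
minimizer dominates `x₀`, and it is Pareto optimal because any point dominating it strictly
decreases the sum. The minimum is attained because, by Fourier–Motzkin elimination, the set of
levels `{t | ∃ x ∈ P, ⟨c, x⟩ ≤ t}` of a polyhedron `P` is cut out by finitely many inequalities
`0 ≤ pₖ + t rₖ`, hence closed. The sum is bounded below on the polyhedron: otherwise every level is
attained, which forces `r = 0`, and the same description for `b = 0` yields a direction `d` with
`⟨aₜ, d⟩ ≤ 0`, `⟨cⱼ, d⟩ ≤ 0` and `∑ⱼ ⟨cⱼ, d⟩ < 0`, along which the given Pareto point could be
improved. -/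

/-- The dot product on `ℝⁿ`. -/
def dot {n : ℕ} (a x : Fin n → ℝ) : ℝ := ∑ i, a i * x i

/-- Feasibility for the linear system `⟨aₜ, x⟩ ≤ bₜ`, `t = 1,…,m`. -/
def Feas {n m : ℕ} (a : Fin m → Fin n → ℝ) (b : Fin m → ℝ) (x : Fin n → ℝ) : Prop :=
  ∀ t, dot (a t) x ≤ b t

/-- Pareto-nondominated points of `F(b)` with respect to objectives `c₁,…,c_q`. -/
def Pareto {n m q : ℕ} (a : Fin m → Fin n → ℝ) (b : Fin m → ℝ)
    (c : Fin q → Fin n → ℝ) (x : Fin n → ℝ) : Prop :=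
  Feas a b x ∧ ¬ ∃ y, Feas a b y ∧ (∀ j, dot (c j) y ≤ dot (c j) x) ∧
    ∃ j, dot (c j) y < dot (c j) x

open Matrix

universe u

lemma exists_between_of_finite {L U : Set ℝ} (hL : L.Finite) (hU : U.Finite)
    (h : ∀ l ∈ L, ∀ r ∈ U, l ≤ r) : ∃ s, (∀ l ∈ L, l ≤ s) ∧ ∀ r ∈ U, s ≤ r := by
  have hbot : ∀ r ∈ U, sInf U ≤ r := fun r hr => csInf_le hU.bddBelow hr
  refine ⟨sSup (insert (sInf U) L), fun l hl => le_csSup (hL.insert _).bddAbove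
    (Set.mem_insert_of_mem _ hl), fun r hr => csSup_le (Set.insert_nonempty _ _) ?_⟩
  rintro l (rfl | hl)
  exacts [hbot r hr, h l hl r hr]

lemma exists_mul_le_iff {I : Type u} [Finite I] (α γ : I → ℝ) :
    (∃ s, ∀ i, s * α i ≤ γ i) ↔
      (∀ t, α t = 0 → 0 ≤ γ t) ∧ ∀ t w, α t < 0 → 0 < α w → 0 ≤ α w * γ t - α t * γ w := by
  constructor
  · rintro ⟨s, hs⟩
    refine ⟨fun t ht => by simpa [ht] using hs t, fun t w ht hw => ?_⟩
    nlinarith [mul_le_mul_of_nonneg_left (hs t) hw.le,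
      mul_le_mul_of_nonneg_left (hs w) (neg_nonneg.2 ht.le)]
  · rintro ⟨hzero, hpair⟩
    obtain ⟨s, hlow, hupp⟩ := exists_between_of_finite
      ((Set.toFinite {t | α t < 0}).image fun t => γ t / α t)
      ((Set.toFinite {w | 0 < α w}).image fun w => γ w / α w) (by
        rintro _ ⟨t, ht, rfl⟩ _ ⟨w, hw, rfl⟩
        dsimp only
        rw [← neg_div_neg_eq, div_le_div_iff₀ (neg_pos.2 ht) hw]
        linarith [hpair t w ht hw])
    refine ⟨s, fun i => ?_⟩
    rcases lt_trichotomy (α i) 0 with hi | hi | hi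
    · have := hlow _ ⟨i, hi, rfl⟩
      rwa [div_le_iff_of_neg hi] at this
    · simpa [hi] using hzero i hi
    · have := hupp _ ⟨i, hi, rfl⟩
      rwa [le_div_iff₀ hi] at this

lemma exists_matrix_smul_le_iff {I : Type u} [Fintype I] (α : I → ℝ) :
    ∃ (J : Type u) (_ : Fintype J) (W : Matrix J I ℝ),
      ∀ γ, (∃ s : ℝ, s • α ≤ γ) ↔ 0 ≤ W *ᵥ γ := by
  classical
  refine ⟨{t // α t = 0} ⊕ {p : I × I // α p.1 < 0 ∧ 0 < α p.2}, inferInstance,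
    of (Sum.elim (fun t => Pi.single t.1 1)
      (fun p => α p.1.2 • Pi.single p.1.1 1 - α p.1.1 • Pi.single p.1.2 1)), fun γ => ?_⟩
  simp only [Pi.le_def, Pi.smul_apply, smul_eq_mul, exists_mul_le_iff, Sum.forall, Subtype.forall,
    Prod.forall, mulVec, of_apply, Sum.elim_inl, Sum.elim_inr, sub_dotProduct, smul_dotProduct,
    single_dotProduct, one_mul, Pi.zero_apply, and_imp]

lemma mulVec_fin_cons {I : Type u} [Fintype I] {n : ℕ} (A : Matrix I (Fin (n + 1)) ℝ) (s : ℝ)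
    (y : Fin n → ℝ) :
    A *ᵥ Fin.cons s y = s • (fun i => A i 0) + (of fun i j => A i j.succ) *ᵥ y :=
  mulVec_cons A s y

theorem exists_mulVec_le_iff {I : Type u} [Fintype I] {n : ℕ} (A : Matrix I (Fin n) ℝ) :
    ∃ (J : Type u) (_ : Fintype J) (U : Matrix J I ℝ), ∀ b, (∃ x, A *ᵥ x ≤ b) ↔ 0 ≤ U *ᵥ b := by
  classical
  induction n generalizing I with
  | zero => exact ⟨I, inferInstance, 1, fun b => by simp [mulVec_empty]⟩
  | succ n ih =>
    set G : Matrix I (Fin n) ℝ := of fun i j => A i j.succ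
    obtain ⟨K, _, W, hW⟩ := exists_matrix_smul_le_iff fun i => A i 0
    obtain ⟨J, _, U, hU⟩ := ih (W * G)
    refine ⟨J, inferInstance, U * W, fun b => ?_⟩
    calc (∃ x, A *ᵥ x ≤ b) ↔ ∃ y, ∃ s : ℝ, s • (fun i => A i 0) ≤ b - G *ᵥ y := by
          simp only [Fin.exists_fin_succ_pi, mulVec_fin_cons, le_sub_iff_add_le]
          exact exists_comm
      _ ↔ ∃ y, (W * G) *ᵥ y ≤ W *ᵥ b := by
          simp only [hW, mulVec_sub, mulVec_mulVec, sub_nonneg]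
      _ ↔ 0 ≤ (U * W) *ᵥ b := by rw [hU, mulVec_mulVec]

lemma fromRows_mulVec_le_elim_iff {I K : Type*} [Fintype I] [Fintype K] {n : ℕ}
    (A : Matrix I (Fin n) ℝ) (C : Matrix K (Fin n) ℝ) (x : Fin n → ℝ) (u : I → ℝ) (v : K → ℝ) :
    fromRows A C *ᵥ x ≤ Sum.elim u v ↔ A *ᵥ x ≤ u ∧ C *ᵥ x ≤ v := by
  rw [fromRows_mulVec, Sum.elim_le_elim_iff]

theorem exists_levels_iff {I : Type u} [Fintype I] {n : ℕ} (A : Matrix I (Fin n) ℝ)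
    (c : Fin n → ℝ) : ∃ (J : Type u) (_ : Fintype J) (P : Matrix J I ℝ) (r : J → ℝ),
      ∀ b t, (∃ x, A *ᵥ x ≤ b ∧ c ⬝ᵥ x ≤ t) ↔ 0 ≤ P *ᵥ b + t • r := by
  obtain ⟨J, _, U, hU⟩ := exists_mulVec_le_iff (fromRows A (replicateRow PUnit c))
  refine ⟨J, inferInstance, of fun j i => U j (Sum.inl i), fun j => U j (Sum.inr .unit),
    fun b t => ?_⟩
  have hsplit : U *ᵥ Sum.elim b (fun _ => t) = (of fun j i => U j (Sum.inl i)) *ᵥ b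
      + t • fun j => U j (Sum.inr .unit) := by
    ext j
    simp [mulVec, dotProduct, Fintype.sum_sum_type, mul_comm]
  simpa [fromRows_mulVec, replicateRow_mulVec_eq_const, Pi.le_def, hsplit] using
    hU (Sum.elim b fun _ => t)

theorem exists_isMinOn_dotProduct {I : Type u} [Fintype I] {n : ℕ} {A : Matrix I (Fin n) ℝ}
    {b : I → ℝ} {c : Fin n → ℝ} (hne : ∃ x, A *ᵥ x ≤ b)
    (hbdd : BddBelow ((c ⬝ᵥ ·) '' {x | A *ᵥ x ≤ b})) :
    ∃ x ∈ {x | A *ᵥ x ≤ b}, IsMinOn (c ⬝ᵥ ·) {x | A *ᵥ x ≤ b} x := by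
  obtain ⟨J, _, P, r, hPr⟩ := exists_levels_iff A c
  set T := {t : ℝ | ∃ x, A *ᵥ x ≤ b ∧ c ⬝ᵥ x ≤ t}
  have hT : IsClosed T := by
    rw [show T = {t | 0 ≤ P *ᵥ b + t • r} from Set.ext fun t => hPr b t]
    exact isClosed_le continuous_const (by fun_prop)
  obtain ⟨M, hM⟩ := hbdd
  have hTbdd : BddBelow T := ⟨M, fun t ⟨x, hx, hxt⟩ => (hM ⟨x, hx, rfl⟩).trans hxt⟩
  obtain ⟨x₀, hx₀⟩ := hne
  obtain ⟨x, hx, hxT⟩ := hT.csInf_mem ⟨_, x₀, hx₀, le_rfl⟩ hTbdd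
  exact ⟨x, hx, fun y hy => hxT.trans (csInf_le hTbdd ⟨y, hy, le_rfl⟩)⟩

theorem exists_dotProduct_neg_of_not_bddBelow {I : Type u} [Fintype I] {n : ℕ}
    {A : Matrix I (Fin n) ℝ} {b : I → ℝ} {c : Fin n → ℝ}
    (h : ¬ BddBelow ((c ⬝ᵥ ·) '' {x | A *ᵥ x ≤ b})) : ∃ d, A *ᵥ d ≤ 0 ∧ c ⬝ᵥ d < 0 := by
  obtain ⟨J, _, P, r, hPr⟩ := exists_levels_iff A c
  have hall : ∀ t, 0 ≤ P *ᵥ b + t • r := fun t => (hPr b t).1 <| by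
    obtain ⟨_, ⟨x, hx, rfl⟩, hxt⟩ := not_bddBelow_iff.1 h t
    exact ⟨x, hx, hxt.le⟩
  have hr : r = 0 := funext fun j => by
    by_contra hrj
    have := hall (-((P *ᵥ b) j + 1) / r j) j
    simp [div_mul_cancel₀ _ hrj] at this
    linarith
  obtain ⟨d, hd, hcd⟩ := (hPr 0 (-1)).2 (by simp [hr])
  exact ⟨d, hd, by linarith⟩

def IsParetoMin {I K : Type*} [Fintype I] [Fintype K] {n : ℕ} (A : Matrix I (Fin n) ℝ)
    (b : I → ℝ) (C : Matrix K (Fin n) ℝ) (x : Fin n → ℝ) : Prop :=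
  A *ᵥ x ≤ b ∧ ∀ y, A *ᵥ y ≤ b → ¬ C *ᵥ y < C *ᵥ x

theorem exists_isParetoMin_le {I K : Type*} [Fintype I] [Fintype K] {n : ℕ}
    {A : Matrix I (Fin n) ℝ} {b : I → ℝ} {C : Matrix K (Fin n) ℝ}
    (hS : ∃ x, IsParetoMin A b C x) {x₀ : Fin n → ℝ} (h₀ : A *ᵥ x₀ ≤ b) :
    ∃ x, IsParetoMin A b C x ∧ C *ᵥ x ≤ C *ᵥ x₀ := by
  obtain ⟨xb, hxb, hxb_min⟩ := hS
  have hsum : ∀ x, (∑ k, C k) ⬝ᵥ x = ∑ k, (C *ᵥ x) k := fun x => sum_dotProduct _ _ _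
  have hbdd :
      BddBelow (((∑ k, C k) ⬝ᵥ ·) '' {x | fromRows A C *ᵥ x ≤ Sum.elim b (C *ᵥ x₀)}) := by
    by_contra h
    obtain ⟨d, hd, hcd⟩ := exists_dotProduct_neg_of_not_bddBelow h
    rw [← Sum.elim_zero_zero, fromRows_mulVec_le_elim_iff] at hd
    refine hxb_min (xb + d) (by simpa [mulVec_add] using add_le_add hxb hd.1) ?_
    rw [mulVec_add, add_lt_iff_neg_left]
    exact lt_of_le_of_ne hd.2 fun h0 => by simp [hsum, h0] at hcd
  obtain ⟨xt, hxt, hmin⟩ :=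
    exists_isMinOn_dotProduct ⟨x₀, (fromRows_mulVec_le_elim_iff ..).2 ⟨h₀, le_rfl⟩⟩ hbdd
  rw [Set.mem_ofPred_eq, fromRows_mulVec_le_elim_iff] at hxt
  refine ⟨xt, ⟨hxt.1, fun y hy hlt => ?_⟩, hxt.2⟩
  have := hmin ((fromRows_mulVec_le_elim_iff ..).2 ⟨hy, hlt.le.trans hxt.2⟩)
  simp only [Set.mem_ofPred_eq, hsum] at this
  exact this.not_gt (Fintype.sum_strictMono hlt)

lemma pareto_iff {n m q : ℕ} {a : Fin m → Fin n → ℝ} {b : Fin m → ℝ}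
    {c : Fin q → Fin n → ℝ} {x : Fin n → ℝ} :
    Pareto a b c x ↔ IsParetoMin (of a) b (of c) x := by
  simp only [Pareto, IsParetoMin, Pi.lt_def, not_exists, not_and]
  rfl

theorem stmt3_general {n m q : ℕ} (a : Fin m → Fin n → ℝ) (b : Fin m → ℝ)
    (c : Fin q → Fin n → ℝ) (hS : ∃ x, Pareto a b c x)
    (x₀ : Fin n → ℝ) (hfeas : Feas a b x₀) :
    ∃ xt, Pareto a b c xt ∧ ∀ j, dot (c j) xt ≤ dot (c j) x₀ := by
  obtain ⟨xt, hxt, hle⟩ := exists_isParetoMin_le (hS.imp fun _ => pareto_iff.1) (x₀ := x₀) hfeas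
  exact ⟨xt, pareto_iff.2 hxt, hle⟩

/-- If `S(b) ≠ ∅`, every feasible non-Pareto point is dominated
componentwise by some Pareto point. -/
theorem stmt3 {n m q : ℕ} (a : Fin m → Fin n → ℝ) (b : Fin m → ℝ)
    (c : Fin q → Fin n → ℝ) (hS : ∃ x, Pareto a b c x)
    (x₀ : Fin n → ℝ) (hfeas : Feas a b x₀) (hnot : ¬ Pareto a b c x₀) :
    ∃ xt, Pareto a b c xt ∧ ∀ j, dot (c j) xt ≤ dot (c j) x₀ :=
  stmt3_general a b c hS x₀ hfeas
end

section
/- Let F(b) be the feasible set of a parameterized linear system, S(b) its Pareto-nondominated set with respect to c₁,…,c_q, and C := cone{c₁,…,c_q}. Fix (b̄, x̄) with x̄ ∈ F(b̄) + {c₁,…,c_q}°, fix c ∈ C, and fix y ∈ ℝᵐ. If ⟨y, b − b̄⟩ ≤ ⟨c, x − x̄⟩ for all (b, x) with x ∈ S(b), and if S(b) is nonempty whenever F(b) is nonempty, then ⟨y, b − b̄⟩ ≤ ⟨c, x − x̄⟩ for all (b, x) with x ∈ F(b). -/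
/-!
Fix `b` and `x ∈ F(b)`. Since `c` is a nonnegative combination of the `cⱼ`, it suffices to find
`xs ∈ S(b)` with `⟨cⱼ, xs⟩ ≤ ⟨cⱼ, x⟩` for all `j`; a minimiser of `∑ⱼ ⟨cⱼ, ·⟩` over the polyhedron
`F(b) ∩ {z | ∀ j, ⟨cⱼ, z⟩ ≤ ⟨cⱼ, x⟩}` is such a point. Any point of `S(b)` shows that the objective
is nonnegative on the recession cone of this polyhedron, and then the minimum is attained: moving
along directions that keep the active constraints tight and decrease the objective, one reaches a
point at which the objective is constant on the face cut out by its active constraints, so its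
value there depends only on the active set, of which there are finitely many.
-/

open Finset

section LinearProgram

variable {E ι : Type*} [AddCommGroup E] [Module ℝ E]
  {w : ι → E →ₗ[ℝ] ℝ} {β : ι → ℝ} {φ : E →ₗ[ℝ] ℝ}

variable (w β φ) in
def IsStationaryPoint (z : E) : Prop :=
  ∀ d : E, (∀ i, w i z = β i → w i d = 0) → φ d = 0

lemma IsStationaryPoint.apply_eq {z z' : E} (hz : IsStationaryPoint w β φ z)
    (hz' : ∀ i, w i z = β i → w i z' = β i) : φ z' = φ z := by
  have := hz (z' - z) fun i hi => by rw [map_sub, hz' i hi, hi, sub_self]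
  rwa [map_sub, sub_eq_zero] at this

variable [Fintype ι]

lemma exists_step_of_not_isStationaryPoint (hrec : ∀ d, (∀ i, w i d ≤ 0) → 0 ≤ φ d) {z : E}
    (hz : ∀ i, w i z ≤ β i) (hns : ¬ IsStationaryPoint w β φ z) :
    ∃ z', (∀ i, w i z' ≤ β i) ∧ φ z' ≤ φ z ∧ (∀ i, w i z = β i → w i z' = β i) ∧
      ∃ i, w i z < β i ∧ w i z' = β i := by
  classical
  obtain ⟨d, hd, hφd⟩ : ∃ d, (∀ i, w i z = β i → w i d = 0) ∧ φ d < 0 := by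
    simp only [IsStationaryPoint, not_forall] at hns
    obtain ⟨d, hd, hne⟩ := hns
    rcases lt_or_gt_of_ne hne with h | h
    · exact ⟨d, hd, h⟩
    · exact ⟨-d, fun i hi => by rw [map_neg, hd i hi, neg_zero], by rw [map_neg]; linarith⟩
  obtain ⟨i, hi⟩ : ∃ i, 0 < w i d := by
    by_contra! h
    linarith [hrec d h]
  obtain ⟨i₀, hi₀, hmin⟩ := (univ.filter fun i => 0 < w i d).exists_min_image
    (fun i => (β i - w i z) / w i d) ⟨i, by simpa using hi⟩
  have hi₀d : 0 < w i₀ d := (mem_filter.1 hi₀).2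
  -- the longest step along `d` that keeps every constraint satisfied; it makes `i₀` tight
  set t := (β i₀ - w i₀ z) / w i₀ d
  have ht : 0 ≤ t := div_nonneg (sub_nonneg.2 (hz i₀)) hi₀d.le
  have happly : ∀ i, w i (z + t • d) = w i z + t * w i d := by simp
  refine ⟨z + t • d, fun i => ?_, ?_, fun i hi => ?_, i₀, ?_, ?_⟩
  · rw [happly]
    rcases le_or_gt (w i d) 0 with h | h
    · nlinarith [hz i]
    · have := hmin i (by simpa using h)
      rw [le_div_iff₀ h] at this
      linarith
  · rw [map_add, map_smul, smul_eq_mul]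
    nlinarith
  · rw [happly, hd i hi, mul_zero, add_zero, hi]
  · exact lt_of_le_of_ne (hz i₀) fun h => hi₀d.ne' (hd i₀ h)
  · rw [happly, div_mul_cancel₀ _ hi₀d.ne']
    ring

lemma exists_isStationaryPoint_le (hrec : ∀ d, (∀ i, w i d ≤ 0) → 0 ≤ φ d) {z : E}
    (hz : ∀ i, w i z ≤ β i) :
    ∃ z', (∀ i, w i z' ≤ β i) ∧ IsStationaryPoint w β φ z' ∧ φ z' ≤ φ z := by
  classical
  induction hk : (univ.filter fun i => w i z < β i).card using Nat.strong_induction_on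
    generalizing z with
  | _ k ih =>
    by_cases hs : IsStationaryPoint w β φ z
    · exact ⟨z, hz, hs, le_rfl⟩
    obtain ⟨z', hz', hle, hact, i, hi, hi'⟩ := exists_step_of_not_isStationaryPoint hrec hz hs
    have hlt : (univ.filter fun i => w i z' < β i).card < k := by
      rw [← hk]
      refine card_lt_card ((ssubset_iff_of_subset fun j => ?_).2 ⟨i, ?_, ?_⟩)
      · simp only [mem_filter, mem_univ, true_and]
        exact fun hj => lt_of_le_of_ne (hz j) fun h => hj.ne (hact j h)
      · simpa using hi
      · simp [hi']
    obtain ⟨z'', hz'', hs'', hle''⟩ := ih _ hlt hz' rfl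
    exact ⟨z'', hz'', hs'', hle''.trans hle⟩

theorem exists_forall_le_of_recession_nonneg (hrec : ∀ d, (∀ i, w i d ≤ 0) → 0 ≤ φ d)
    {z₀ : E} (hz₀ : ∀ i, w i z₀ ≤ β i) :
    ∃ z, (∀ i, w i z ≤ β i) ∧ ∀ z', (∀ i, w i z' ≤ β i) → φ z ≤ φ z' := by
  set S := {z | (∀ i, w i z ≤ β i) ∧ IsStationaryPoint w β φ z}
  have hfin : (φ '' S).Finite := by
    have hcover : φ '' S ⊆ ⋃ I : Set ι, φ '' {z ∈ S | {i | w i z = β i} = I} :=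
      fun _ ⟨z, hz, hφz⟩ => Set.mem_iUnion.2 ⟨_, z, ⟨hz, rfl⟩, hφz⟩
    refine (Set.finite_iUnion fun I => Set.Subsingleton.finite ?_).subset hcover
    rintro _ ⟨z, ⟨hz, rfl⟩, rfl⟩ _ ⟨z', ⟨-, hI⟩, rfl⟩
    exact (hz.2.apply_eq fun i hi => (Set.ext_iff.1 hI i).2 hi).symm
  obtain ⟨z₁, hz₁, hs₁, -⟩ := exists_isStationaryPoint_le hrec hz₀
  obtain ⟨_, ⟨z, hz, rfl⟩, hmin⟩ :=
    Set.exists_min_image (φ '' S) id hfin ⟨_, z₁, ⟨hz₁, hs₁⟩, rfl⟩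
  refine ⟨z, hz.1, fun z' hz' => ?_⟩
  obtain ⟨z'', hz'', hs'', hle''⟩ := exists_isStationaryPoint_le hrec hz'
  exact (hmin _ ⟨z'', ⟨hz'', hs''⟩, rfl⟩).trans hle''

end LinearProgram

section Pareto

variable {n m q : ℕ} {a : Fin m → Fin n → ℝ} {b : Fin m → ℝ} {c : Fin q → Fin n → ℝ}

lemma dot_eq_dotProduct (v z : Fin n → ℝ) : dot v z = v ⬝ᵥ z := rfl

lemma Pareto.eq_zero_of_recession {x₀ d : Fin n → ℝ} (hx₀ : Pareto a b c x₀)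
    (ha : ∀ t, dot (a t) d ≤ 0) (hc : ∀ j, dot (c j) d ≤ 0) (j : Fin q) : dot (c j) d = 0 := by
  refine (hc j).antisymm (not_lt.1 fun hlt => hx₀.2 ⟨x₀ + d, fun t => ?_, fun k => ?_, j, ?_⟩)
  all_goals simp only [dot_eq_dotProduct, dotProduct_add] at *
  · linarith [show a t ⬝ᵥ x₀ ≤ b t from hx₀.1 t, ha t]
  · linarith [hc k]
  · linarith

lemma exists_pareto_le (hS : ∃ x₀, Pareto a b c x₀) {x : Fin n → ℝ} (hx : Feas a b x) :
    ∃ xs, Pareto a b c xs ∧ ∀ j, dot (c j) xs ≤ dot (c j) x := by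
  obtain ⟨x₀, hx₀⟩ := hS
  let w : Fin m ⊕ Fin q → (Fin n → ℝ) →ₗ[ℝ] ℝ :=
    Sum.elim (fun t => dotProductBilin ℝ ℝ (a t)) fun j => dotProductBilin ℝ ℝ (c j)
  let β : Fin m ⊕ Fin q → ℝ := Sum.elim b fun j => dot (c j) x
  have hw : ∀ z, (∀ k, w k z ≤ β k) ↔ Feas a b z ∧ ∀ j, dot (c j) z ≤ dot (c j) x := fun z => by
    simp [w, β, Sum.forall, Feas, dot_eq_dotProduct]
  have hrec : ∀ d, (∀ k, w k d ≤ 0) → 0 ≤ dotProductBilin ℝ ℝ (∑ j, c j) d := by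
    intro d hd
    simp only [w, Sum.forall, Sum.elim_inl, Sum.elim_inr, dotProductBilin_apply_apply] at hd
    have hzero : ∀ j, c j ⬝ᵥ d = 0 := hx₀.eq_zero_of_recession hd.1 hd.2
    simp only [dotProductBilin_apply_apply, sum_dotProduct, hzero, sum_const_zero, le_refl]
  obtain ⟨xs, hxs, hmin⟩ :=
    exists_forall_le_of_recession_nonneg hrec ((hw x).2 ⟨hx, fun _ => le_rfl⟩)
  obtain ⟨hxsF, hxsle⟩ := (hw xs).1 hxs
  refine ⟨xs, ⟨hxsF, ?_⟩, hxsle⟩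
  rintro ⟨y, hy, hle, j, hlt⟩
  have := hmin y ((hw y).2 ⟨hy, fun k => (hle k).trans (hxsle k)⟩)
  simp only [dotProductBilin_apply_apply, sum_dotProduct] at this
  exact not_lt.2 this (sum_lt_sum (fun k _ => hle k) ⟨j, mem_univ _, hlt⟩)

lemma dot_sum_smul_le {lam : Fin q → ℝ} (hlam : ∀ j, 0 ≤ lam j) {u v : Fin n → ℝ}
    (h : ∀ j, dot (c j) u ≤ dot (c j) v) :
    dot (∑ j, lam j • c j) u ≤ dot (∑ j, lam j • c j) v := by
  simp only [dot_eq_dotProduct, sum_dotProduct, smul_dotProduct, smul_eq_mul]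
  exact sum_le_sum fun j _ => mul_le_mul_of_nonneg_left (h j) (hlam j)

end Pareto

theorem stmt4_general {n m q : ℕ} (a : Fin m → Fin n → ℝ) (c : Fin q → Fin n → ℝ)
    (bb : Fin m → ℝ) (xb : Fin n → ℝ)
    (cv : Fin n → ℝ)
    (hcv : ∃ lam : Fin q → ℝ, (∀ j, 0 ≤ lam j) ∧ cv = ∑ j, lam j • c j)
    (y : Fin m → ℝ)
    (hSne : ∀ b : Fin m → ℝ, (∃ x, Feas a b x) → ∃ x, Pareto a b c x)
    (hgphS : ∀ (b : Fin m → ℝ) (x : Fin n → ℝ), Pareto a b c x →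
      dot y (b - bb) ≤ dot cv (x - xb)) :
    ∀ (b : Fin m → ℝ) (x : Fin n → ℝ), Feas a b x →
      dot y (b - bb) ≤ dot cv (x - xb) := by
  intro b x hx
  obtain ⟨lam, hlam, rfl⟩ := hcv
  obtain ⟨xs, hxs, hle⟩ := exists_pareto_le (hSne b ⟨x, hx⟩) hx
  refine (hgphS b xs hxs).trans (dot_sum_smul_le hlam fun j => ?_)
  simpa only [dot_eq_dotProduct, dotProduct_sub, sub_le_sub_iff_right] using hle j

/-- If the linear inequality `⟨y, b − b̄⟩ ≤ ⟨c, x − x̄⟩` (with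
`c ∈ cone{c₁,…,c_q}` and `x̄ ∈ F(b̄) + {c₁,…,c_q}°`) holds over the graph of the
Pareto solution mapping `S`, then it holds over the graph of `F`. -/
theorem stmt4 {n m q : ℕ} (a : Fin m → Fin n → ℝ) (c : Fin q → Fin n → ℝ)
    (bb : Fin m → ℝ) (xb : Fin n → ℝ)
    (hxb : ∃ xf u, Feas a bb xf ∧ (∀ j, 0 ≤ dot (c j) u) ∧ xb = xf + u)
    (cv : Fin n → ℝ)
    (hcv : ∃ lam : Fin q → ℝ, (∀ j, 0 ≤ lam j) ∧ cv = ∑ j, lam j • c j)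
    (y : Fin m → ℝ)
    (hSne : ∀ b : Fin m → ℝ, (∃ x, Feas a b x) → ∃ x, Pareto a b c x)
    (hgphS : ∀ (b : Fin m → ℝ) (x : Fin n → ℝ), Pareto a b c x →
      dot y (b - bb) ≤ dot cv (x - xb)) :
    ∀ (b : Fin m → ℝ) (x : Fin n → ℝ), Feas a b x →
      dot y (b - bb) ≤ dot cv (x - xb) :=
  stmt4_general a c bb xb cv hcv y hSne hgphS
end

section
/- Let a₁,…,a_m ∈ ℝⁿ, b ∈ ℝᵐ, u ∈ ℝⁿ, and F(b) = {x : ⟨aₜ,x⟩ ≤ bₜ, t = 1,…,m}. Then F(b) + span{u} = {x ∈ ℝⁿ : ⟨aₜ,x⟩ ≤ bₜ whenever ⟨aₜ,u⟩ = 0, and ⟨a_s,u⟩(⟨aₜ,x⟩ − bₜ) − ⟨aₜ,u⟩(⟨a_s,x⟩ − b_s) ≤ 0 whenever ⟨aₜ,u⟩ < 0 and ⟨a_s,u⟩ > 0}, provided F(b) is nonempty. -/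
lemma dot_add_smul {n : ℕ} (a y u : Fin n → ℝ) (lam : ℝ) :
    dot a (y + lam • u) = dot a y + lam * dot a u := by
  simp only [dot, Pi.add_apply, Pi.smul_apply, smul_eq_mul, mul_add,
    Finset.sum_add_distrib, Finset.mul_sum]
  exact congrArg _ (Finset.sum_congr rfl fun i _ => by ring)

lemma exists_lam_between {m : ℕ} (L U : Finset (Fin m)) (f g : Fin m → ℝ)
    (h : ∀ i ∈ L, ∀ j ∈ U, f i ≤ g j) :
    ∃ lam : ℝ, (∀ i ∈ L, f i ≤ lam) ∧ (∀ j ∈ U, lam ≤ g j) := by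
  rcases L.eq_empty_or_nonempty with hL | hL
  · rcases U.eq_empty_or_nonempty with hU | hU
    · exact ⟨0, by simp [hL], by simp [hU]⟩
    · exact ⟨U.inf' hU g, by simp [hL], fun j hj => Finset.inf'_le g hj⟩
  · refine ⟨L.sup' hL f, fun i hi => Finset.le_sup' f hi, fun j hj => ?_⟩
    exact Finset.sup'_le hL f fun i hi => h i hi j hj

/-- Fourier–Motzkin elimination of a line: if `F(b) ≠ ∅`, then
`F(b) + span{u}` is the solution set of the inequalities `⟨aₜ,x⟩ ≤ bₜ` for
`⟨aₜ,u⟩ = 0` together with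
`⟨a_s,u⟩(⟨aₜ,x⟩ − bₜ) − ⟨aₜ,u⟩(⟨a_s,x⟩ − b_s) ≤ 0` for `⟨aₜ,u⟩ < 0 < ⟨a_s,u⟩`. -/
theorem stmt8 {n m : ℕ} (a : Fin m → Fin n → ℝ) (b : Fin m → ℝ) (u : Fin n → ℝ)
    (hne : ∃ x, Feas a b x) :
    {x : Fin n → ℝ | ∃ y, ∃ lam : ℝ, Feas a b y ∧ x = y + lam • u} =
      {x : Fin n → ℝ |
        (∀ t, dot (a t) u = 0 → dot (a t) x ≤ b t) ∧
        (∀ t s, dot (a t) u < 0 → 0 < dot (a s) u →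
          dot (a s) u * (dot (a t) x - b t) - dot (a t) u * (dot (a s) x - b s) ≤ 0)} := by
  ext x
  simp only [Set.mem_setOf_eq]
  constructor
  · rintro ⟨y, lam, hy, rfl⟩
    constructor
    · intro t ht
      rw [dot_add_smul, ht, mul_zero, add_zero]
      exact hy t
    · intro t s ht hs
      have h1 := hy t
      have h2 := hy s
      rw [dot_add_smul, dot_add_smul]
      nlinarith [mul_nonneg hs.le (sub_nonneg.2 (sub_nonneg.2 (hy t) : (0:ℝ) ≤ b t - dot (a t) y))]
  · rintro ⟨h0, hcross⟩
    set c : Fin m → ℝ := fun t => dot (a t) u with hc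
    obtain ⟨lam, hlo, hhi⟩ := exists_lam_between (Finset.univ.filter fun t => 0 < c t)
      (Finset.univ.filter fun t => c t < 0)
      (fun t => (dot (a t) x - b t) / c t) (fun t => (dot (a t) x - b t) / c t)
      (by
        intro s hs t ht
        simp only [Finset.mem_filter, Finset.mem_univ, true_and] at hs ht
        have hcr := hcross t s ht hs
        have key : (dot (a s) x - b s) / c s - (dot (a t) x - b t) / c t ≤ 0 := by
          rw [div_sub_div _ _ (ne_of_gt hs) (ne_of_lt ht)]
          apply div_nonpos_of_nonneg_of_nonpos
          · nlinarith
          · nlinarith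
        linarith)
    refine ⟨x - lam • u, lam, ?_, by abel⟩
    intro t
    have hdot : dot (a t) (x - lam • u) = dot (a t) x - lam * c t := by
      have := dot_add_smul (a t) (x - lam • u) u lam
      simp only [sub_add_cancel] at this
      linarith
    rw [hdot]
    rcases lt_trichotomy (c t) 0 with h | h | h
    · have := hhi t (by simp [h])
      rw [le_div_iff_of_neg h] at this
      linarith
    · have := h0 t h
      rw [h, mul_zero]
      linarith
    · have := hlo t (by simp [h])
      rw [div_le_iff₀ h] at this
      linarith
end

section
/- Consider the mapping M : ℝ ⇉ ℝ given by M(y) = [y, 2y] for y ≥ 0 and M(y) = {0} for y < 0, and its epigraphical mapping E_M(y) = M(y) + ℝ₊. Then E_M has the Aubin (Lipschitz-like) property around (0,0) with exact Lipschitz bound equal to 1, whereas M has the Aubin property around (0,0) with exact Lipschitz bound equal to 2; in particular lip E_M(0,0) = 1 < 2 = lip M(0,0). -/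
open Pointwise

/-- `M` is Lipschitz-like (Aubin) around `(yb, zb)` with constant `ℓ`. -/
def AubinWith {Y Z : Type*} [MetricSpace Y] [MetricSpace Z]
    (M : Y → Set Z) (yb : Y) (zb : Z) (ℓ : ℝ) : Prop :=
  ∃ U ∈ nhds yb, ∃ V ∈ nhds zb, ∀ y ∈ U, ∀ y' ∈ U, ∀ z ∈ V ∩ M y,
    Metric.infDist z (M y') ≤ ℓ * dist y y'

/-- The exact Lipschitz bound (Lipschitz modulus) of `M` around `(yb, zb)`. -/
noncomputable def lipMod {Y Z : Type*} [MetricSpace Y] [MetricSpace Z]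
    (M : Y → Set Z) (yb : Y) (zb : Z) : ℝ :=
  sInf {ℓ : ℝ | 0 ≤ ℓ ∧ AubinWith M yb zb ℓ}

/-- The mapping `M(y) = [y, 2y]` for `y ≥ 0` and `M(y) = {0}` for `y < 0`. -/
noncomputable def Mex : ℝ → Set ℝ := fun y => if 0 ≤ y then Set.Icc y (2 * y) else {0}

/-- Its epigraphical mapping `E_M(y) = M(y) + ℝ₊`. -/
noncomputable def EMex : ℝ → Set ℝ := fun y => Mex y + Set.Ici (0 : ℝ)

lemma EMex_eq (y : ℝ) : EMex y = Set.Ici (max y 0) := by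
  unfold EMex Mex
  ext z
  by_cases h : 0 ≤ y
  · simp only [if_pos h, Set.mem_add, Set.mem_Icc, Set.mem_Ici, max_eq_left h]
    constructor
    · rintro ⟨a, ⟨ha1, _⟩, b, hb, rfl⟩; linarith
    · intro hz; exact ⟨y, ⟨le_refl y, by linarith⟩, z - y, by linarith, by ring⟩
  · simp only [if_neg h, Set.mem_add, Set.mem_singleton_iff, Set.mem_Ici,
      max_eq_right (le_of_not_ge h)]
    constructor
    · rintro ⟨a, rfl, b, hb, rfl⟩; linarith
    · intro hz; exact ⟨0, rfl, z, hz, by ring⟩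

lemma le_infDist' {s : Set ℝ} (hs : s.Nonempty) {x b : ℝ}
    (h : ∀ y ∈ s, b ≤ dist x y) : b ≤ Metric.infDist x s := by
  by_contra hlt
  push_neg at hlt
  obtain ⟨y, hy, hd⟩ := (Metric.infDist_lt_iff hs).mp hlt
  exact absurd (h y hy) (by linarith)

lemma aubin_EMex_one : AubinWith EMex 0 0 1 := by
  refine ⟨Set.univ, Filter.univ_mem, Set.univ, Filter.univ_mem, ?_⟩
  rintro y - y' - z ⟨-, hz⟩
  rw [EMex_eq] at hz ⊢
  rw [Set.mem_Ici] at hz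
  have hw : max z (max y' 0) ∈ Set.Ici (max y' 0) := Set.mem_Ici.mpr (le_max_right _ _)
  refine le_trans (Metric.infDist_le_dist_of_mem hw) ?_
  rw [Real.dist_eq, Real.dist_eq, one_mul]
  have h1 : |max y' 0 - max y 0| ≤ |y' - y| := abs_max_sub_max_le_abs y' y 0
  rw [abs_sub_comm y' y] at h1
  have h2 := abs_le.mp h1
  rcases le_total z (max y' 0) with h | h
  · rw [max_eq_right h, abs_sub_comm]
    rw [abs_of_nonneg (by linarith)]
    have : max y' 0 - max y 0 ≤ |y - y'| := by linarith [h2.2]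
    linarith
  · rw [max_eq_left h]
    simp [abs_nonneg]

lemma aubin_Mex_two : AubinWith Mex 0 0 2 := by
  refine ⟨Set.univ, Filter.univ_mem, Set.univ, Filter.univ_mem, ?_⟩
  rintro y - y' - z ⟨-, hz⟩
  unfold Mex at hz ⊢
  by_cases h : 0 ≤ y
  · rw [if_pos h, Set.mem_Icc] at hz
    by_cases h' : 0 ≤ y'
    · rw [if_pos h']
      set w := max y' (min z (2 * y')) with hwdef
      have hwmem : w ∈ Set.Icc y' (2 * y') :=
        ⟨le_max_left _ _, max_le (by linarith) (min_le_right _ _)⟩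
      refine le_trans (Metric.infDist_le_dist_of_mem hwmem) ?_
      rw [Real.dist_eq, Real.dist_eq]
      rcases le_total z y' with hc | hc
      · have hwv : w = y' := by
          rw [hwdef, max_eq_left]; exact le_trans (min_le_left _ _) hc
        rw [hwv]
        rcases abs_cases (y - y') with ⟨he, _⟩ | ⟨he, _⟩ <;>
          rcases abs_cases (z - y') with ⟨hz2, _⟩ | ⟨hz2, _⟩ <;> nlinarith [hz.1, hz.2]
      · rcases le_total z (2 * y') with hd | hd
        · have hwv : w = z := by rw [hwdef, min_eq_left hd, max_eq_right hc]
          rw [hwv, sub_self, abs_zero]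
          positivity
        · have hwv : w = 2 * y' := by
            rw [hwdef, min_eq_right hd, max_eq_right (by linarith)]
          rw [hwv]
          rcases abs_cases (y - y') with ⟨he, _⟩ | ⟨he, _⟩ <;>
            rcases abs_cases (z - 2 * y') with ⟨hz2, _⟩ | ⟨hz2, _⟩ <;> nlinarith [hz.1, hz.2]
    · rw [if_neg h']
      push_neg at h'
      rw [Metric.infDist_singleton, Real.dist_eq z 0, Real.dist_eq y y', sub_zero,
        abs_of_nonneg (by linarith [hz.1] : (0:ℝ) ≤ z)]
      rcases abs_cases (y - y') with ⟨he, _⟩ | ⟨he, _⟩ <;> nlinarith [hz.2]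
  · rw [if_neg h, Set.mem_singleton_iff] at hz
    subst hz
    push_neg at h
    by_cases h' : 0 ≤ y'
    · rw [if_pos h']
      have hw : y' ∈ Set.Icc y' (2 * y') := ⟨le_refl _, by linarith⟩
      refine le_trans (Metric.infDist_le_dist_of_mem hw) ?_
      rw [Real.dist_eq, Real.dist_eq, zero_sub, abs_neg, abs_of_nonneg h']
      rcases abs_cases (y - y') with ⟨he, _⟩ | ⟨he, _⟩ <;> nlinarith
    · rw [if_neg h', Metric.infDist_singleton, dist_self]
      positivity

lemma lower_EMex {ℓ : ℝ} (h : AubinWith EMex 0 0 ℓ) : 1 ≤ ℓ := by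
  obtain ⟨U, hU, V, hV, hA⟩ := h
  obtain ⟨ε, hε, hball⟩ := Metric.mem_nhds_iff.mp hU
  set t := ε / 2 with ht
  have htpos : 0 < t := by positivity
  have h0U : (0 : ℝ) ∈ U := hball (by simp [hε])
  have htU : t ∈ U := hball (by simp [Real.dist_eq, abs_of_pos htpos]; linarith)
  have h0V : (0 : ℝ) ∈ V := mem_of_mem_nhds hV
  have h0M : (0 : ℝ) ∈ EMex 0 := by rw [EMex_eq]; simp
  have := hA 0 h0U t htU 0 ⟨h0V, h0M⟩
  rw [EMex_eq t, max_eq_left htpos.le] at this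
  have hlow : t ≤ Metric.infDist 0 (Set.Ici t) := by
    refine le_infDist' Set.nonempty_Ici fun w hw => ?_
    have hw' : t ≤ w := hw
    rw [Real.dist_eq, zero_sub, abs_neg, abs_of_nonneg (htpos.le.trans hw')]
    exact hw'
  rw [Real.dist_eq, zero_sub, abs_neg, abs_of_pos htpos] at this
  nlinarith

lemma lower_Mex {ℓ : ℝ} (h : AubinWith Mex 0 0 ℓ) : 2 ≤ ℓ := by
  obtain ⟨U, hU, V, hV, hA⟩ := h
  obtain ⟨ε₁, hε₁, hb₁⟩ := Metric.mem_nhds_iff.mp hU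
  obtain ⟨ε₂, hε₂, hb₂⟩ := Metric.mem_nhds_iff.mp hV
  set t := min ε₁ ε₂ / 3 with ht
  have htpos : 0 < t := by positivity
  have ht1 : t < ε₁ := by
    have := min_le_left ε₁ ε₂; simp only [ht]; linarith
  have ht2 : 2 * t < ε₂ := by
    have := min_le_right ε₁ ε₂; simp only [ht]; linarith
  have h0U : (0 : ℝ) ∈ U := hb₁ (by simp [hε₁])
  have htU : t ∈ U := hb₁ (by simp [Real.dist_eq, abs_of_pos htpos]; linarith)
  have h2tV : 2 * t ∈ V := hb₂ (by
    simp [Real.dist_eq, abs_of_pos htpos]; linarith)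
  have hM : 2 * t ∈ Mex t := by
    unfold Mex; rw [if_pos htpos.le, Set.mem_Icc]; constructor <;> linarith
  have := hA t htU 0 h0U (2 * t) ⟨h2tV, hM⟩
  have hM0 : Mex 0 = {0} := by unfold Mex; simp
  rw [hM0, Metric.infDist_singleton, Real.dist_eq, Real.dist_eq, sub_zero, sub_zero,
    abs_of_pos (by linarith : (0:ℝ) < 2 * t), abs_of_pos htpos] at this
  nlinarith

/-- `E_M` has the Aubin property around `(0,0)` with
`lip E_M(0,0) = 1`, while `M` has it with `lip M(0,0) = 2`; in particular
`lip E_M(0,0) = 1 < 2 = lip M(0,0)`. -/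
theorem stmt14 :
    (∃ ℓ : ℝ, AubinWith EMex 0 0 ℓ) ∧ lipMod EMex 0 0 = 1 ∧
      (∃ ℓ : ℝ, AubinWith Mex 0 0 ℓ) ∧ lipMod Mex 0 0 = 2 ∧
      lipMod EMex 0 0 < lipMod Mex 0 0 := by
  have hE : lipMod EMex 0 0 = 1 := by
    unfold lipMod
    apply le_antisymm
    · exact csInf_le ⟨0, fun x hx => hx.1⟩ ⟨zero_le_one, aubin_EMex_one⟩
    · exact le_csInf ⟨1, zero_le_one, aubin_EMex_one⟩ fun x hx => lower_EMex hx.2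
  have hM : lipMod Mex 0 0 = 2 := by
    unfold lipMod
    apply le_antisymm
    · exact csInf_le ⟨0, fun x hx => hx.1⟩ ⟨by norm_num, aubin_Mex_two⟩
    · exact le_csInf ⟨2, by norm_num, aubin_Mex_two⟩ fun x hx => lower_Mex hx.2
  exact ⟨⟨1, aubin_EMex_one⟩, hE, ⟨2, aubin_Mex_two⟩, hM, by rw [hE, hM]; norm_num⟩
end
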